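/- Exploration of the feasible subspace: let B(β) be the mixer built from the sequence of all transpositions of S_N (in some fixed order), and for r ∈ ℕ let B^{(r)}(β) denote the composition of r copies of B(β), each acting on the shared main register H_x but on its own fresh block of auxiliary registers (y, z_1,…,z_n, c), all initialized to |0⟩. Then for all x, x′ ∈ F there exist r ∈ ℕ and β ∈ ℝ and a computational basis state |φ⟩ of the auxiliary registers such that ⟨x′|⊗⟨φ| B^{(r)}(β) (|x⟩ ⊗ |0⟩_aux) ≠ 0; equivalently, Tr[|x′⟩⟨x′| · Tr_aux(B^{(r)}(β)(|x⟩⊗|0⟩_aux)(⟨x|⊗⟨0|_aux)B^{(r)}(β)†)] > 0. -/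

import Mathlib

/-- The action of a permutation `π ∈ S_N` on bit strings:
`π(x) = (x_{π⁻¹(1)}, …, x_{π⁻¹(N)})`. -/
def permBits {N : ℕ} (π : Equiv.Perm (Fin N)) (x : Fin N → Bool) : Fin N → Bool :=
  fun j => x (π.symm j)

/-- Hamming weight of a bit string. -/
def hammingWeight {N : ℕ} (x : Fin N → Bool) : ℕ :=
  (Finset.univ.filter fun j => x j = true).card

/-- The control predicate `χ_π(x) = ⋀_j [¬x_j ∨ ⋀_{l ∈ nbhd(π(j))} ¬x_{π⁻¹(l)}]`. -/
def chi {N : ℕ} (G : SimpleGraph (Fin N)) [DecidableRel G.Adj] (π : Equiv.Perm (Fin N))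
    (x : Fin N → Bool) : Bool :=
  decide (∀ j : Fin N, ¬ x j = true ∨ ∀ l : Fin N, G.Adj (π j) l → ¬ x (π.symm l) = true)

/-- The feasible set `F`: no two adjacent vertices are both marked, and the Hamming
weight equals `k`. -/
def Fset {N : ℕ} (G : SimpleGraph (Fin N)) (k : ℕ) : Set (Fin N → Bool) :=
  {x | (∀ j l : Fin N, G.Adj j l → ¬ (x j = true ∧ x l = true)) ∧ hammingWeight x = k}

/-- One block of auxiliary registers `(y, z_1, …, z_n, c)`. -/
abbrev Aux (N n : ℕ) := (Fin N → Bool) × (Fin n → Bool) × Bool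

/-- The all-zero auxiliary block `|0⟩_y|0⟩_{z_1}⋯|0⟩_{z_n}|0⟩_c`. -/
def auxZero (N n : ℕ) : Aux N n := ((fun _ => false), (fun _ => false), false)

/-- Basis index set for the main register together with `r` fresh blocks of auxiliary
registers. -/
abbrev BigIdx (N n r : ℕ) := (Fin N → Bool) × (Fin r → Aux N n)

/-- The total Hilbert space: the main register `H_x` together with `r` fresh blocks of
auxiliary registers, each consisting of `H_y ⊗ ℂ²_{z_1} ⊗ ⋯ ⊗ ℂ²_{z_n} ⊗ ℂ²_c`. -/
abbrev Hbig (N n r : ℕ) := EuclideanSpace ℂ (BigIdx N n r)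

/-- The linear extension of the basis map `|p⟩ ↦ |g(p)⟩`. -/
noncomputable def basisExtend {ι : Type*} [Fintype ι] [DecidableEq ι] (g : ι → ι) :
    EuclideanSpace ℂ ι →ₗ[ℂ] EuclideanSpace ℂ ι :=
  Matrix.toEuclideanLin (Matrix.of fun q p => if g p = q then (1 : ℂ) else 0)

/-- The basis state `|x⟩`. -/
noncomputable def ket {ι : Type*} [Fintype ι] [DecidableEq ι] (x : ι) : EuclideanSpace ℂ ι :=
  EuclideanSpace.single x 1

/-- The copy unitary `A` of layer `t`: on basis states, `|w⟩_x|y⟩_y ↦ |w⟩_x|y ⊕ w⟩_y`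
(bitwise XOR) acting on the `y` register of the `t`-th auxiliary block, trivially on
everything else. -/
noncomputable def Aop (N n : ℕ) {r : ℕ} (t : Fin r) : Hbig N n r →ₗ[ℂ] Hbig N n r :=
  basisExtend fun p =>
    (p.1,
      Function.update p.2 t
        ((fun j => xor ((p.2 t).1 j) (p.1 j)), (p.2 t).2.1, (p.2 t).2.2))

/-- The operator `V_i` of layer `t`: the linear extension of the basis map sending
`|w⟩_x|y⟩_y|z⟩_{z_i}|c⟩_c ↦ |π_i(w)⟩_x|y⟩_y|1−z⟩_{z_i}|1−c⟩_c` (registers `y`, `z_i`, `c`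
of the `t`-th auxiliary block) when `χ_{π_i}(y) = 1` and `z_i = c`, and fixing the basis
vector otherwise. -/
noncomputable def Vop {N n : ℕ} (G : SimpleGraph (Fin N)) [DecidableRel G.Adj]
    (π : Fin n → Equiv.Perm (Fin N)) {r : ℕ} (t : Fin r) (i : Fin n) :
    Hbig N n r →ₗ[ℂ] Hbig N n r :=
  basisExtend fun p =>
    if chi G (π i) (p.2 t).1 = true ∧ (p.2 t).2.1 i = (p.2 t).2.2 then
      (permBits (π i) p.1,
        Function.update p.2 t
          ((p.2 t).1, Function.update (p.2 t).2.1 i (!(p.2 t).2.1 i), !(p.2 t).2.2))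
    else p

/-- The partial mixer `B_{π_i}(β) = cos β·𝟙 − i sin β·V_i` of layer `t`. -/
noncomputable def Bop {N n : ℕ} (G : SimpleGraph (Fin N)) [DecidableRel G.Adj]
    (π : Fin n → Equiv.Perm (Fin N)) {r : ℕ} (t : Fin r) (i : Fin n) (β : ℝ) :
    Hbig N n r →ₗ[ℂ] Hbig N n r :=
  (Real.cos β : ℂ) • (1 : Module.End ℂ (Hbig N n r)) -
    (Complex.I * (Real.sin β : ℂ)) • Vop G π t i

/-- The mixer `B(β) = B_{π_n}(β) ⋯ B_{π_1}(β) · A` of layer `t`, acting on the shared main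
register and on the `t`-th (fresh) block of auxiliary registers. -/
noncomputable def layerMixer {N n : ℕ} (G : SimpleGraph (Fin N)) [DecidableRel G.Adj]
    (π : Fin n → Equiv.Perm (Fin N)) {r : ℕ} (t : Fin r) (β : ℝ) :
    Hbig N n r →ₗ[ℂ] Hbig N n r :=
  (List.ofFn fun i : Fin n => Bop G π t i β).reverse.prod * Aop N n t

/-- `B^{(r)}(β)`: the composition of `r` copies of the mixer `B(β)`, each acting on the
shared main register but on its own fresh block of auxiliary registers. -/
noncomputable def iterMixer {N n : ℕ} (G : SimpleGraph (Fin N)) [DecidableRel G.Adj]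
    (π : Fin n → Equiv.Perm (Fin N)) (r : ℕ) (β : ℝ) : Hbig N n r →ₗ[ℂ] Hbig N n r :=
  (List.ofFn fun t : Fin r => layerMixer G π t β).reverse.prod

/-!
With `u = -i tan β`, each partial mixer is `cos β · (1 + u V_i)`, and `A` and `V_i` permute
basis states. Hence `⟨q| B^{(r)}(β) |p⟩` is `cos^{rn} β` times a polynomial in `u` with
natural-number coefficients, which counts the gate-by-gate paths from `p` to `q`. A transposition
path `x = w_0 → ⋯ → w_r = x′` through `F` yields such a path: in layer `t` the copy gate writes
`w_t` into the fresh `y` register, feasibility of `w_{t+1}` makes `χ` hold, and only the gate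
of the `t`-th transposition branches. So the polynomial is nonzero, it does not vanish at
`u = -i t` for some real `t`, and `β = arctan t` works.
-/

open Polynomial

lemma natPoly_add_ne_zero_of_left {a b : ℕ[X]} (ha : a ≠ 0) : a + b ≠ 0 := by
  contrapose! ha
  ext m
  have := congrArg (coeff · m) ha
  simp only [coeff_add, coeff_zero, Nat.add_eq_zero_iff] at this
  exact this.1

lemma exists_aeval_neg_I_mul_ne_zero {P : ℕ[X]} (hP : P ≠ 0) :
    ∃ t : ℝ, aeval (-Complex.I * t) P ≠ 0 := by
  set Q := P.map (algebraMap ℕ ℂ)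
  have hQ : Q ≠ 0 := (Polynomial.map_ne_zero_iff (FaithfulSMul.algebraMap_injective ℕ ℂ)).mpr hP
  by_contra! h
  refine hQ (eq_zero_of_infinite_isRoot Q (Set.infinite_of_injective_forall_mem
    (f := fun t : ℝ => -Complex.I * t) (fun a b hab => ?_) fun t => ?_))
  · simpa using hab
  · simpa [Q, IsRoot, eval_map_algebraMap] using h t

section Gate

variable {ι : Type*}

inductive Gate (ι : Type*)
  | basis (g : ι → ι)
  | branch (g : ι → ι)

def Gate.Step : Gate ι → ι → ι → Prop
  | basis g, p, q => g p = q
  | branch g, p, q => p = q ∨ g p = q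

def Reach : List (Gate ι) → ι → ι → Prop
  | [], p, q => p = q
  | γ :: L, p, q => ∃ m, γ.Step p m ∧ Reach L m q

lemma reach_append {L₁ L₂ : List (Gate ι)} {p m q : ι} (h₁ : Reach L₁ p m) (h₂ : Reach L₂ m q) :
    Reach (L₁ ++ L₂) p q := by
  induction L₁ generalizing p with
  | nil => subst h₁; exact h₂
  | cons γ L₁ ih =>
    obtain ⟨p', hp', h₁⟩ := h₁
    exact ⟨p', hp', ih h₁⟩

lemma reach_flatten_ofFn {r : ℕ} (Ls : Fin r → List (Gate ι)) (s : ℕ → ι)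
    (h : ∀ t : Fin r, Reach (Ls t) (s t) (s (t + 1))) :
    Reach (List.ofFn Ls).flatten (s 0) (s r) := by
  induction r generalizing s with
  | zero => rfl
  | succ r ih =>
    rw [List.ofFn_succ, List.flatten_cons]
    exact reach_append (h 0) (ih (fun t => Ls t.succ) (fun m => s (m + 1)) fun t => h t.succ)

lemma reach_map_branch_self (gs : List (ι → ι)) (p : ι) : Reach (gs.map .branch) p p := by
  induction gs with
  | nil => rfl
  | cons g gs ih => exact ⟨p, Or.inl rfl, ih⟩

lemma reach_map_branch_of_mem {gs : List (ι → ι)} {g : ι → ι} (hg : g ∈ gs) (p : ι) :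
    Reach (gs.map .branch) p (g p) := by
  induction gs generalizing p with
  | nil => cases hg
  | cons g' gs ih =>
    rcases List.mem_cons.mp hg with rfl | hg
    · exact ⟨g p, Or.inr rfl, reach_map_branch_self gs _⟩
    · exact ⟨p, Or.inl rfl, ih hg p⟩

end Gate

section Circuit

variable {ι : Type*} [Fintype ι] [DecidableEq ι]

lemma basisExtend_apply (g : ι → ι) (v : EuclideanSpace ℂ ι) (q : ι) :
    basisExtend g v q = ∑ p ∈ Finset.univ.filter (g · = q), v p := by
  simp [basisExtend, Matrix.toLpLin_apply, Matrix.mulVec, dotProduct, Finset.sum_filter]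

def pushforward {M : Type*} [AddCommMonoid M] (g : ι → ι) (v : ι → M) (q : ι) : M :=
  ∑ p ∈ Finset.univ.filter (g · = q), v p

noncomputable def Gate.toLin (u : ℂ) : Gate ι → EuclideanSpace ℂ ι →ₗ[ℂ] EuclideanSpace ℂ ι
  | basis g => basisExtend g
  | branch g => 1 + u • basisExtend g

/-- Amplitudes as polynomials in the branching weight `u`; the coefficients count paths. -/
noncomputable def Gate.symb : Gate ι → (ι → ℕ[X]) → ι → ℕ[X]
  | basis g, v => pushforward g v
  | branch g, v => fun q => v q + X * pushforward g v q

noncomputable def circuitLin (u : ℂ) (L : List (Gate ι)) :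
    EuclideanSpace ℂ ι →ₗ[ℂ] EuclideanSpace ℂ ι :=
  (L.map (Gate.toLin u)).reverse.prod

noncomputable def circuitSymb (L : List (Gate ι)) (v : ι → ℕ[X]) : ι → ℕ[X] :=
  L.foldl (fun v γ => γ.symb v) v

noncomputable def evalVec (u : ℂ) (v : ι → ℕ[X]) : EuclideanSpace ℂ ι :=
  WithLp.toLp 2 fun q => aeval u (v q)

lemma Gate.toLin_evalVec (u : ℂ) (γ : Gate ι) (v : ι → ℕ[X]) :
    γ.toLin u (evalVec u v) = evalVec u (γ.symb v) := by
  ext q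
  cases γ <;> simp [toLin, symb, evalVec, basisExtend_apply, pushforward]

lemma circuitLin_cons (u : ℂ) (γ : Gate ι) (L : List (Gate ι)) :
    circuitLin u (γ :: L) = circuitLin u L * γ.toLin u := by
  simp [circuitLin]

lemma circuitLin_append (u : ℂ) (L₁ L₂ : List (Gate ι)) :
    circuitLin u (L₁ ++ L₂) = circuitLin u L₂ * circuitLin u L₁ := by
  simp [circuitLin]

lemma circuitLin_flatten (u : ℂ) (Ls : List (List (Gate ι))) :
    circuitLin u Ls.flatten = (Ls.map (circuitLin u)).reverse.prod := by
  induction Ls with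
  | nil => simp [circuitLin]
  | cons L Ls ih => simp [circuitLin_append, ih]

lemma circuitLin_evalVec (u : ℂ) (L : List (Gate ι)) (v : ι → ℕ[X]) :
    circuitLin u L (evalVec u v) = evalVec u (circuitSymb L v) := by
  induction L generalizing v with
  | nil => simp [circuitLin, circuitSymb]
  | cons γ L ih => simp [circuitLin_cons, Gate.toLin_evalVec, ih, circuitSymb]

lemma ket_eq_evalVec (u : ℂ) (p : ι) : ket p = evalVec u (Pi.single p 1) := by
  ext q
  by_cases h : q = p <;> simp [ket, evalVec, h]

lemma pushforward_ne_zero {g : ι → ι} {v : ι → ℕ[X]} {p : ι} (hp : v p ≠ 0) :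
    pushforward g v (g p) ≠ 0 := by
  rw [pushforward, ← Finset.add_sum_erase _ _ (show p ∈ _ by simp)]
  exact natPoly_add_ne_zero_of_left hp

lemma Gate.symb_ne_zero {γ : Gate ι} {v : ι → ℕ[X]} {p q : ι} (hpq : γ.Step p q)
    (hp : v p ≠ 0) : γ.symb v q ≠ 0 := by
  cases γ with
  | basis g => subst hpq; exact pushforward_ne_zero hp
  | branch g =>
    show v q + X * pushforward g v q ≠ 0
    rcases hpq with rfl | rfl
    · exact natPoly_add_ne_zero_of_left hp
    · rw [add_comm]
      exact natPoly_add_ne_zero_of_left (mul_ne_zero X_ne_zero (pushforward_ne_zero hp))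

lemma circuitSymb_ne_zero {L : List (Gate ι)} {v : ι → ℕ[X]} {p q : ι} (hpq : Reach L p q)
    (hp : v p ≠ 0) : circuitSymb L v q ≠ 0 := by
  induction L generalizing v p with
  | nil => subst hpq; exact hp
  | cons γ L ih =>
    obtain ⟨m, hpm, hmq⟩ := hpq
    exact ih hmq (Gate.symb_ne_zero hpm hp)

theorem exists_circuitLin_ket_ne_zero {L : List (Gate ι)} {p q : ι} (hpq : Reach L p q) :
    ∃ t : ℝ, circuitLin (-Complex.I * t) L (ket p) q ≠ 0 := by
  obtain ⟨t, ht⟩ := exists_aeval_neg_I_mul_ne_zero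
    (circuitSymb_ne_zero hpq (v := Pi.single p 1) (by simp))
  exact ⟨t, by rwa [ket_eq_evalVec (-Complex.I * t), circuitLin_evalVec]⟩

end Circuit

lemma prod_reverse_ofFn_smul {R M : Type*} [Monoid R] [Monoid M] [MulAction R M]
    [IsScalarTower R M M] [SMulCommClass R M M] {m : ℕ} (c : R) (f : Fin m → M) :
    (List.ofFn fun i => c • f i).reverse.prod = c ^ m • (List.ofFn f).reverse.prod := by
  rw [← Function.comp_def, ← List.map_ofFn, ← List.map_reverse, ← List.smul_prod,
    List.length_reverse, List.length_ofFn]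

lemma chi_eq_true_of_permBits {N : ℕ} {G : SimpleGraph (Fin N)} [DecidableRel G.Adj]
    {σ : Equiv.Perm (Fin N)} {w : Fin N → Bool}
    (hw : ∀ j l, G.Adj j l → ¬ (permBits σ w j = true ∧ permBits σ w l = true)) :
    chi G σ w = true := by
  rw [chi, decide_eq_true_eq]
  intro j
  by_cases hj : w j = true
  · exact Or.inr fun l hadj hl => hw (σ j) l hadj ⟨by simpa [permBits] using hj, hl⟩
  · exact Or.inl hj

section Mixer

variable {N n : ℕ} (G : SimpleGraph (Fin N)) [DecidableRel G.Adj]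
  (τ : Fin n → Equiv.Perm (Fin N)) {r : ℕ}

def copyMap (t : Fin r) (p : BigIdx N n r) : BigIdx N n r :=
  (p.1, Function.update p.2 t ((fun j => xor ((p.2 t).1 j) (p.1 j)), (p.2 t).2.1, (p.2 t).2.2))

def mixMap (t : Fin r) (i : Fin n) (p : BigIdx N n r) : BigIdx N n r :=
  if chi G (τ i) (p.2 t).1 = true ∧ (p.2 t).2.1 i = (p.2 t).2.2 then
    (permBits (τ i) p.1,
      Function.update p.2 t
        ((p.2 t).1, Function.update (p.2 t).2.1 i (!(p.2 t).2.1 i), !(p.2 t).2.2))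
  else p

def layerGates (t : Fin r) : List (Gate (BigIdx N n r)) :=
  .basis (copyMap t) :: List.ofFn fun i => .branch (mixMap G τ t i)

def mixerCircuit (r : ℕ) : List (Gate (BigIdx N n r)) :=
  (List.ofFn fun t : Fin r => layerGates G τ t).flatten

variable {G τ}

lemma Bop_eq_smul_toLin (t : Fin r) (i : Fin n) {β : ℝ} (hβ : Real.cos β ≠ 0) :
    Bop G τ t i β =
      (Real.cos β : ℂ) • (Gate.branch (mixMap G τ t i)).toLin (-Complex.I * Real.tan β) := by
  have hsin : Real.cos β * Real.tan β = Real.sin β := by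
    rw [Real.tan_eq_sin_div_cos]; field_simp
  rw [Bop, Gate.toLin, smul_add, smul_smul, sub_eq_add_neg, ← neg_smul]
  congr 2
  rw [← Complex.ofReal_inj.mpr hsin]; push_cast; ring

lemma layerMixer_eq_smul_circuitLin (t : Fin r) {β : ℝ} (hβ : Real.cos β ≠ 0) :
    layerMixer G τ t β =
      (Real.cos β : ℂ) ^ n • circuitLin (-Complex.I * Real.tan β) (layerGates G τ t) := by
  simp only [layerMixer, Bop_eq_smul_toLin _ _ hβ, layerGates, circuitLin_cons]
  rw [prod_reverse_ofFn_smul, smul_mul_assoc]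
  rw [circuitLin, List.map_ofFn]
  rfl

lemma iterMixer_eq_smul_circuitLin (r : ℕ) {β : ℝ} (hβ : Real.cos β ≠ 0) :
    iterMixer G τ r β =
      (Real.cos β : ℂ) ^ (r * n) • circuitLin (-Complex.I * Real.tan β) (mixerCircuit G τ r) := by
  simp only [iterMixer, layerMixer_eq_smul_circuitLin _ hβ, mixerCircuit, circuitLin_flatten]
  rw [prod_reverse_ofFn_smul, List.map_ofFn, ← pow_mul, mul_comm]
  rfl

/-- The block left by a layer that copied `w` into `y` and then branched at gate `i` only. -/
def traceBlock (w : Fin N → Bool) (i : Fin n) : Aux N n :=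
  (w, Function.update (fun _ => false) i true, true)

def prefixBlocks (φ : Fin r → Aux N n) (m : ℕ) : Fin r → Aux N n :=
  fun t => if (t : ℕ) < m then φ t else auxZero N n

lemma update_prefixBlocks (φ : Fin r → Aux N n) (t : Fin r) :
    Function.update (prefixBlocks φ t) t (φ t) = prefixBlocks φ (t + 1) := by
  ext1 t'
  rcases eq_or_ne t' t with rfl | ht
  · simp [prefixBlocks]
  · have : (t' : ℕ) ≠ t := Fin.val_ne_of_ne ht
    simp only [Function.update_of_ne ht, prefixBlocks]
    split_ifs <;> first | rfl | omega

lemma copyMap_of_auxZero {t : Fin r} {w : Fin N → Bool} {b : Fin r → Aux N n}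
    (hb : b t = auxZero N n) :
    copyMap t (w, b) = (w, Function.update b t (w, fun _ => false, false)) := by
  simp [copyMap, hb, auxZero]

lemma mixMap_of_fresh {t : Fin r} {i : Fin n} {w y : Fin N → Bool} {b : Fin r → Aux N n}
    (hb : b t = (y, fun _ => false, false)) (hchi : chi G (τ i) y = true) :
    mixMap G τ t i (w, b) = (permBits (τ i) w, Function.update b t (traceBlock y i)) := by
  simp [mixMap, hb, hchi, traceBlock]

lemma reach_layerGates (t : Fin r) (i : Fin n) {w : Fin N → Bool} {b : Fin r → Aux N n}
    (hb : b t = auxZero N n) (hchi : chi G (τ i) w = true) :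
    Reach (layerGates G τ t) (w, b) (permBits (τ i) w, Function.update b t (traceBlock w i)) := by
  refine ⟨_, copyMap_of_auxZero hb, ?_⟩
  have := reach_map_branch_of_mem (List.mem_ofFn.mpr ⟨i, rfl⟩ : mixMap G τ t i ∈ List.ofFn _)
    (w, Function.update b t (w, fun _ => false, false))
  rwa [List.map_ofFn, mixMap_of_fresh (by simp) hchi, Function.update_idem] at this

lemma reach_mixerCircuit (w : ℕ → Fin N → Bool) (idx : Fin r → Fin n)
    (hstep : ∀ t : Fin r, w (t + 1) = permBits (τ (idx t)) (w t))
    (hindep : ∀ t : Fin r, ∀ j l, G.Adj j l → ¬ (w (t + 1) j = true ∧ w (t + 1) l = true)) :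
    Reach (mixerCircuit G τ r) (w 0, fun _ => auxZero N n)
      (w r, fun t => traceBlock (w t) (idx t)) := by
  let φ (t : Fin r) : Aux N n := traceBlock (w t) (idx t)
  have h0 : prefixBlocks φ 0 = fun _ => auxZero N n := by ext1 t; simp [prefixBlocks]
  have hr : prefixBlocks φ r = φ := by ext1 t; simp [prefixBlocks]
  suffices h : Reach (mixerCircuit G τ r) (w 0, prefixBlocks φ 0) (w r, prefixBlocks φ r) by
    rwa [h0, hr] at h
  refine reach_flatten_ofFn _ (fun m => (w m, prefixBlocks φ m)) fun t => ?_
  have hchi : chi G (τ (idx t)) (w t) = true :=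
    chi_eq_true_of_permBits fun j l hjl => hstep t ▸ hindep t j l hjl
  have hlayer := reach_layerGates t (idx t) (b := prefixBlocks φ t) (by simp [prefixBlocks]) hchi
  rwa [← hstep t, update_prefixBlocks φ t] at hlayer

end Mixer

theorem stmt2_general {N k n : ℕ} (G : SimpleGraph (Fin N)) [DecidableRel G.Adj]
    (τ : Fin n → Equiv.Perm (Fin N))
    (hτall : ∀ σ : Equiv.Perm (Fin N), σ.IsSwap ↔ ∃ i, τ i = σ)
    (hconn : ∀ x ∈ Fset G k, ∀ y ∈ Fset G k,
      ∃ L : List (Equiv.Perm (Fin N)),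
        (∀ σ ∈ L, σ.IsSwap) ∧
        L.foldl (fun s σ => permBits σ s) x = y ∧
        ∀ L₁, L₁ <+: L → (L₁.foldl (fun s σ => permBits σ s) x) ∈ Fset G k)
    (x x' : Fin N → Bool) (hx : x ∈ Fset G k) (hx' : x' ∈ Fset G k) :
    ∃ (r : ℕ) (β : ℝ) (φ : Fin r → Aux N n),
      iterMixer G τ r β (ket (x, fun _ => auxZero N n)) (x', φ) ≠ 0 := by
  obtain ⟨L, hswap, hfold, hprefix⟩ := hconn x hx x' hx'
  set w : ℕ → Fin N → Bool := fun m => (L.take m).foldl (fun s σ => permBits σ s) x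
  choose idx hidx using fun t : Fin L.length => (hτall L[t]).mp (hswap _ (List.getElem_mem t.2))
  have hstep (t : Fin L.length) : w (t + 1) = permBits (τ (idx t)) (w t) := by
    simp only [w, List.take_add_one, List.getElem?_eq_getElem t.2, Option.toList_some,
      List.foldl_append, List.foldl_cons, List.foldl_nil, hidx, Fin.getElem_fin]
  have hreach := reach_mixerCircuit (G := G) w idx hstep
    fun t => (hprefix _ (List.take_prefix _ L)).1
  obtain ⟨u, hu⟩ := exists_circuitLin_ket_ne_zero hreach
  refine ⟨L.length, Real.arctan u, fun t => traceBlock (w t) (idx t), ?_⟩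
  rw [iterMixer_eq_smul_circuitLin _ (Real.cos_arctan_pos u).ne', Real.tan_arctan]
  simp only [w, List.take_zero, List.foldl_nil, List.take_length, hfold] at hu
  exact mul_ne_zero (pow_ne_zero _ (Complex.ofReal_ne_zero.mpr (Real.cos_arctan_pos u).ne')) hu

/-- Exploration of the feasible subspace: if the mixer is built from the sequence of all
transpositions of `S_N` (in some fixed order), and the feasible set `F` has the
transposition-connectivity property (any two feasible bit strings are connected by a
sequence of transpositions passing through feasible bit strings, as holds for
FJSP-type feasible sets), then for all `x, x′ ∈ F` there are `r ∈ ℕ`, `β ∈ ℝ` and a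
computational basis state `|φ⟩` of the auxiliary registers such that
`⟨x′|⊗⟨φ| B^{(r)}(β) (|x⟩ ⊗ |0⟩_aux) ≠ 0`. -/
theorem stmt2 {N k n : ℕ} (G : SimpleGraph (Fin N)) [DecidableRel G.Adj]
    (τ : Fin n → Equiv.Perm (Fin N)) (hτinj : Function.Injective τ)
    (hτall : ∀ σ : Equiv.Perm (Fin N), σ.IsSwap ↔ ∃ i, τ i = σ)
    (hconn : ∀ x ∈ Fset G k, ∀ y ∈ Fset G k,
      ∃ L : List (Equiv.Perm (Fin N)),
        (∀ σ ∈ L, σ.IsSwap) ∧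
        L.foldl (fun s σ => permBits σ s) x = y ∧
        ∀ L₁, L₁ <+: L → (L₁.foldl (fun s σ => permBits σ s) x) ∈ Fset G k)
    (x x' : Fin N → Bool) (hx : x ∈ Fset G k) (hx' : x' ∈ Fset G k) :
    ∃ (r : ℕ) (β : ℝ) (φ : Fin r → Aux N n),
      iterMixer G τ r β (ket (x, fun _ => auxZero N n)) (x', φ) ≠ 0 :=
  stmt2_general G τ hτall hconn x x' hx hx'
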